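/- Let r be a normal separator path. Then r_0 and T are not strongly r-connected, r_{|r|−1} and S are not strongly r-connected, S and T are not strongly r-connected, and the reverse of r is not a normal separator path. -/

import Mathlib

/-!
Let `H` be `G` with the edges of `r = a a' ⋯ b' b` deleted. Since no proper subpath of `r`
separates, putting back the edge `a a'` (resp. `b' b`) reconnects `H`: so `a` and `a'` lie in
different components of `H`, every vertex lies in one of these two, and likewise `b'` and `b`
are separated. If `a` and `b` were joined by a path avoiding the interior of `r`, then `b'`
would lie in the component of `a'`, and a shortest path `a' ⋯ b'` in the part of `G` spanned by
that component, together with a shortest such path `b ⋯ a`, would close a chordless cycle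
of length at least four: a chord between the two paths would be an edge of `H` joining two
components. Each of the four claims produces such a path, glued from the strong connection and
the pieces before and after `r` of a traversing `S`–`T` path.
-/

open SimpleGraph

namespace NSP

variable {V : Type*}

/-- A chordal graph: every cycle with at least four vertices has a chord,
i.e. an edge not on the cycle joining two vertices of the cycle. -/
def Chordal (G : SimpleGraph V) : Prop :=
  ∀ ⦃v : V⦄ (c : G.Walk v v), c.IsCycle → 4 ≤ c.length →
    ∃ u w : V, u ∈ c.support ∧ w ∈ c.support ∧ G.Adj u w ∧ s(u, w) ∉ c.edges

/-- A path in `G`, given as a nonempty list of vertices with consecutive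
vertices adjacent. -/
def IsPathSeq (G : SimpleGraph V) (p : List V) : Prop :=
  p ≠ [] ∧ p.Chain' G.Adj

/-- A simple path: a path all of whose vertices are distinct. -/
def IsSimpleSeq (G : SimpleGraph V) (p : List V) : Prop :=
  IsPathSeq G p ∧ p.Nodup

/-- The set of edges of a path sequence. -/
def edgesOf (p : List V) : Set (Sym2 V) :=
  {e | ∃ (i : ℕ) (h : i + 1 < p.length),
    e = s(p.get ⟨i, by omega⟩, p.get ⟨i + 1, h⟩)}

/-- A set of edges is separating if deleting it from `G` leaves a
disconnected graph. -/
def Separating (G : SimpleGraph V) (D : Set (Sym2 V)) : Prop :=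
  ¬ (G.deleteEdges D).Connected

/-- A path is separating if its edge set is separating. -/
def SeparatingPath (G : SimpleGraph V) (p : List V) : Prop :=
  Separating G (edgesOf p)

/-- The contiguous subpath `p_{i,j} = p_i → ⋯ → p_j`. -/
def subseq (p : List V) (i j : ℕ) : List V :=
  (p.take (j + 1)).drop i

/-- `q` is a contiguous subpath of `p`. -/
def ContigSub (q p : List V) : Prop :=
  ∃ i j : ℕ, i ≤ j ∧ j < p.length ∧ q = subseq p i j

/-- A separator path: a simple separating path that does not properly contain
(as a contiguous subpath) a separating path. -/
def SeparatorPath (G : SimpleGraph V) (p : List V) : Prop :=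
  IsSimpleSeq G p ∧ SeparatingPath G p ∧
    ∀ q : List V, ContigSub q p → q ≠ p → ¬ SeparatingPath G q

/-- `u` and `v` are weakly `p`-connected: some path between `u` and `v`
shares no edge with `p`. -/
def WeaklyConn (G : SimpleGraph V) (p : List V) (u v : V) : Prop :=
  ∃ q : List V, IsPathSeq G q ∧ q.head? = some u ∧ q.getLast? = some v ∧
    edgesOf q ∩ edgesOf p = ∅

/-- `u` and `v` are strongly `p`-connected: some path between `u` and `v`
shares no edge with `p` and, except at its endpoints, no vertex with `p`. -/
def StronglyConn (G : SimpleGraph V) (p : List V) (u v : V) : Prop :=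
  ∃ q : List V, IsPathSeq G q ∧ q.head? = some u ∧ q.getLast? = some v ∧
    edgesOf q ∩ edgesOf p = ∅ ∧
    ∀ (i : ℕ) (h : i < q.length), 0 < i → i + 1 < q.length → q.get ⟨i, h⟩ ∉ p

/-- A path `r` is traversable if some simple path from `S` to `T` contains
`r` as a contiguous subpath. -/
def Traversable (G : SimpleGraph V) (S T : V) (r : List V) : Prop :=
  ∃ p : List V, IsSimpleSeq G p ∧ p.head? = some S ∧ p.getLast? = some T ∧
    ContigSub r p

/-- A bad vertex: the middle vertex of a traversable separator path with
exactly two edges. -/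
def BadVertex (G : SimpleGraph V) (S T : V) (v : V) : Prop :=
  ∃ r : List V, SeparatorPath G r ∧ Traversable G S T r ∧ r.length = 3 ∧
    r[1]? = some v

/-- A separator path is useful if each two-edge segment is shorter than the
corresponding chord. -/
def Useful (w : Sym2 V → ℝ) (r : List V) : Prop :=
  ∀ (i : ℕ) (h : i + 2 < r.length),
    w s(r.get ⟨i, by omega⟩, r.get ⟨i + 1, by omega⟩) +
      w s(r.get ⟨i + 1, by omega⟩, r.get ⟨i + 2, h⟩) <
      w s(r.get ⟨i, by omega⟩, r.get ⟨i + 2, h⟩)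

/-- A normal separator path: traversable, useful, and with more than two
edges (i.e. at least four vertices). -/
def NormalSep (G : SimpleGraph V) (w : Sym2 V → ℝ) (S T : V) (r : List V) : Prop :=
  SeparatorPath G r ∧ Traversable G S T r ∧ Useful w r ∧ 3 < r.length

/-- `v` is an inner vertex of `r` (a vertex of `r` other than its endpoints). -/
def InnerMem (r : List V) (v : V) : Prop :=
  ∃ (i : ℕ) (h : i < r.length), 0 < i ∧ i + 1 < r.length ∧ r.get ⟨i, h⟩ = v

/-- The total length of a path with respect to edge lengths `w`. -/
def pathLength (w : Sym2 V → ℝ) (p : List V) : ℝ :=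
  ((p.zip p.tail).map fun q => w s(q.1, q.2)).sum

/-- All edges of `G` have positive length. -/
def EdgePos (G : SimpleGraph V) (w : Sym2 V → ℝ) : Prop :=
  ∀ e ∈ G.edgeSet, 0 < w e

/-- The subgraph of `G` formed by the edges of `D` together with their
endpoints. -/
def edgeSubgraph (G : SimpleGraph V) (D : Set (Sym2 V)) : G.Subgraph where
  verts := {v | ∃ e ∈ D ∩ G.edgeSet, v ∈ e}
  Adj u v := s(u, v) ∈ D ∧ G.Adj u v
  adj_sub h := h.2
  edge_vert {v w} h := ⟨s(v, w), ⟨h.1, h.2⟩, Sym2.mem_mk_left v w⟩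
  symm := ⟨fun u v h => by
    obtain ⟨h1, h2⟩ := h
    exact ⟨by rwa [Sym2.eq_swap], h2.symm⟩⟩

/-- For a simple path `P₀` in `G` and indices `i ≤ j < |P₀|`: in the graph
obtained by deleting the edges of `P₀` from `G`, vertices `P₀ₖ`
(`i ≤ k ≤ j`) of equal parity of index are in a common connected component,
while those of different parity are in different connected components. -/
def OddEvenSplit (G : SimpleGraph V) (P0 : List V) (i j : ℕ)
    (hj : j < P0.length) : Prop :=
  (∀ (k l : ℕ) (hik : i ≤ k) (hkj : k ≤ j) (hil : i ≤ l) (hlj : l ≤ j),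
      k % 2 = l % 2 →
      (G.deleteEdges (edgesOf P0)).Reachable
        (P0.get ⟨k, by omega⟩) (P0.get ⟨l, by omega⟩)) ∧
  (∀ (k l : ℕ) (hik : i ≤ k) (hkj : k ≤ j) (hil : i ≤ l) (hlj : l ≤ j),
      k % 2 ≠ l % 2 →
      ¬ (G.deleteEdges (edgesOf P0)).Reachable
        (P0.get ⟨k, by omega⟩) (P0.get ⟨l, by omega⟩))

end NSP

namespace SimpleGraph

variable {V : Type*} {G H : SimpleGraph V} {s : Set V} {u v x y : V}

@[simp]
lemma adj_spanningCoe_induce : (G.induce s).spanningCoe.Adj u v ↔ G.Adj u v ∧ u ∈ s ∧ v ∈ s := by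
  constructor
  · rintro ⟨-, u, v, h, rfl, rfl⟩
    exact ⟨h, u.2, v.2⟩
  · rintro ⟨h, hu, hv⟩
    exact ⟨h.ne, ⟨u, hu⟩, ⟨v, hv⟩, h, rfl, rfl⟩

lemma Reachable.mem_of_spanningCoe_induce (h : (G.induce s).spanningCoe.Reachable u v)
    (hu : u ∈ s) : v ∈ s := by
  by_contra hv
  obtain ⟨p⟩ := h
  obtain ⟨d, -, -, hd⟩ := p.exists_boundary_dart s hu hv
  exact hd (adj_spanningCoe_induce.1 d.adj).2.2

lemma spanningCoe_induce_le_deleteEdges {D : Set (Sym2 V)} (hD : ∀ e ∈ D, ∃ x ∈ e, x ∉ s) :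
    (G.induce s).spanningCoe ≤ G.deleteEdges D := by
  intro u v huv
  obtain ⟨huv, hu, hv⟩ := adj_spanningCoe_induce.1 huv
  refine (deleteEdges_adj ..).2 ⟨huv, fun he => ?_⟩
  obtain ⟨x, hx, hxs⟩ := hD _ he
  rcases Sym2.mem_iff.1 hx with rfl | rfl <;> contradiction

lemma reachable_spanningCoe_induce_of_isChain :
    ∀ {l : List V} {u v : V}, l.IsChain G.Adj → l.head? = some u → l.getLast? = some v →
      (∀ w ∈ l, w ∈ s) → (G.induce s).spanningCoe.Reachable u v
  | [], _, _, _, hu, _, _ => by simp at hu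
  | [x], u, v, _, hu, hv, _ => by simp_all
  | x :: y :: l, u, v, hl, hu, hv, hs => by
    simp only [List.head?_cons, Option.some.injEq] at hu
    subst hu
    obtain ⟨hxy, hl⟩ := List.isChain_cons_cons.1 hl
    refine (adj_spanningCoe_induce.2 ⟨hxy, hs x (by simp), hs y (by simp)⟩).reachable.trans
      (reachable_spanningCoe_induce_of_isChain hl rfl ?_ fun w hw => hs w (by simp [hw]))
    simpa using hv

lemma Reachable.spanningCoe_induce_of_le (hHG : H ≤ G) (h : H.Reachable u v) :
    (G.induce {w | H.Reachable u w}).spanningCoe.Reachable u v := by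
  classical
  obtain ⟨p⟩ := h
  refine reachable_spanningCoe_induce_of_isChain (p.isChain_adj_support.imp fun _ _ h => hHG h)
    (by cases p <;> simp) (by simp [List.getLast?_eq_some_getLast, p.getLast_support])
    fun w hw => ⟨p.takeUntil w hw⟩

lemma reachable_or_reachable_of_connected_sup_edge (h : (H ⊔ edge x y).Connected) (v : V) :
    H.Reachable x v ∨ H.Reachable y v := by
  by_contra! hv
  obtain ⟨p⟩ := h.preconnected x v
  obtain ⟨d, -, hd₁, hd₂⟩ :=
    p.exists_boundary_dart {w | H.Reachable x w ∨ H.Reachable y w} (Or.inl .rfl) (by simpa using hv)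
  rcases d.adj with hd | hd
  · exact hd₂ (hd₁.imp (·.trans hd.reachable) (·.trans hd.reachable))
  · obtain ⟨⟨-, h⟩ | ⟨-, h⟩, -⟩ := (edge_adj ..).1 hd <;> simp [h] at hd₂

lemma Walk.exists_isSubwalk_of_mem_support (p : G.Walk x y) (hu : u ∈ p.support)
    (hv : v ∈ p.support) : (∃ q : G.Walk u v, q.IsSubwalk p) ∨ ∃ q : G.Walk v u, q.IsSubwalk p := by
  classical
  rw [← p.take_spec hu, Walk.mem_support_append_iff] at hv
  rcases hv with hv | hv
  · exact .inr ⟨_, ((p.takeUntil u hu).isSubwalk_dropUntil hv).trans (p.isSubwalk_takeUntil hu)⟩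
  · exact .inl ⟨_, ((p.dropUntil u hu).isSubwalk_takeUntil hv).trans (p.isSubwalk_dropUntil hu)⟩

lemma Walk.edges_eq_of_length_eq_one {p : G.Walk u v} (hp : p.length = 1) :
    p.edges = [s(u, v)] := by
  rcases p with _ | ⟨_, _ | _⟩ <;> simp_all

lemma Walk.isChordless_of_length_eq_dist {p : G.Walk x y} (hp : p.length = G.dist x y) :
    p.IsChordless := by
  refine Walk.isChordless_iff_forall_mem_edges.2 fun u v hu hv huv => ?_
  rcases p.exists_isSubwalk_of_mem_support hu hv with ⟨q, hq⟩ | ⟨q, hq⟩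
  · have hq1 := length_eq_dist_of_subwalk hp hq
    rw [dist_eq_one_iff_adj.2 huv] at hq1
    exact hq.edges_subset (by simp [Walk.edges_eq_of_length_eq_one hq1])
  · have hq1 := length_eq_dist_of_subwalk hp hq
    rw [dist_eq_one_iff_adj.2 huv.symm] at hq1
    exact hq.edges_subset (by simp [Walk.edges_eq_of_length_eq_one hq1, Sym2.eq_swap])

lemma Reachable.exists_isPath_isChordless_of_spanningCoe_induce
    (h : (G.induce s).spanningCoe.Reachable u v) (hu : u ∈ s) :
    ∃ p : G.Walk u v, p.IsPath ∧ p.IsChordless ∧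
      ∀ w ∈ p.support, (G.induce s).spanningCoe.Reachable u w := by
  classical
  obtain ⟨q, hq⟩ := h.exists_walk_length_eq_dist
  have hqs : ∀ w ∈ q.support, (G.induce s).spanningCoe.Reachable u w :=
    fun w hw => ⟨q.takeUntil w hw⟩
  refine ⟨q.mapLe (spanningCoe_induce_le G s),
    (Walk.isPath_mapLe _).2 (q.isPath_of_length_eq_dist hq),
    Walk.isChordless_iff_forall_mem_edges.2 fun x y hx hy hxy => ?_, ?_⟩
  · rw [Walk.support_mapLe_eq_support] at hx hy
    rw [Walk.edges_mapLe_eq_edges]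
    exact (Walk.isChordless_of_length_eq_dist hq).mem_edges hx hy (adj_spanningCoe_induce.2
      ⟨hxy, (hqs x hx).mem_of_spanningCoe_induce hu, (hqs y hy).mem_of_spanningCoe_induce hu⟩)
  · simpa only [Walk.support_mapLe_eq_support] using hqs

lemma Walk.isCycle_cons_append_cons {a a' b' b : V} (haa' : G.Adj a a') (hb'b : G.Adj b' b)
    {W : G.Walk a' b'} {Q : G.Walk b a} (hW : W.IsPath) (hQ : Q.IsPath)
    (hWQ : ∀ v ∈ W.support, v ∉ Q.support) (hab : a ≠ b) :
    (Walk.cons haa' (W.append (Walk.cons hb'b Q))).IsCycle := by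
  refine (Walk.cons_isCycle_iff _ _).2 ⟨?_, ?_⟩
  · rw [Walk.isPath_def, Walk.support_append, Walk.support_cons, List.tail_cons]
    exact hW.support_nodup.append hQ.support_nodup hWQ
  · simp only [Walk.edges_append, Walk.edges_cons, List.mem_append, List.mem_cons, not_or]
    refine ⟨fun h => hWQ a (W.fst_mem_support_of_mem_edges h) Q.end_mem_support, fun h => ?_,
      fun h => hWQ a' W.start_mem_support (Q.snd_mem_support_of_mem_edges h)⟩
    rcases Sym2.eq_iff.1 h with ⟨rfl, -⟩ | ⟨rfl, -⟩
    · exact hWQ _ W.end_mem_support Q.end_mem_support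
    · exact hab rfl

end SimpleGraph

namespace NSP

variable {V : Type*}

theorem Chordal.exists_cross_chord {G : SimpleGraph V} (hch : Chordal G) {a a' b' b : V}
    (haa' : G.Adj a a') (hb'b : G.Adj b' b) (hab : a ≠ b) (ha'b' : a' ≠ b')
    {W : G.Walk a' b'} {Q : G.Walk b a} (hW : W.IsPath) (hQ : Q.IsPath)
    (hWc : W.IsChordless) (hQc : Q.IsChordless) (hWQ : ∀ v ∈ W.support, v ∉ Q.support) :
    ∃ u ∈ W.support, ∃ x ∈ Q.support, G.Adj u x ∧ s(u, x) ≠ s(a, a') ∧ s(u, x) ≠ s(b', b) := by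
  set C := Walk.cons haa' (W.append (Walk.cons hb'b Q))
  have hClen : 4 ≤ C.length := by
    have hW0 := mt W.eq_of_length_eq_zero ha'b'
    have hQ0 := mt Q.eq_of_length_eq_zero hab.symm
    simp only [C, Walk.length_cons, Walk.length_append]
    omega
  obtain ⟨u, x, hu, hx, hux, hnot⟩ :=
    hch C (Walk.isCycle_cons_append_cons haa' hb'b hW hQ hWQ hab) hClen
  have hCsupp : ∀ z ∈ C.support, z ∈ W.support ∨ z ∈ Q.support := by
    intro z hz
    simp only [C, Walk.support_cons, Walk.support_append, List.mem_cons, List.mem_append,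
      List.tail_cons] at hz
    rcases hz with rfl | hz | hz
    exacts [.inr Q.end_mem_support, .inl hz, .inr hz]
  simp only [C, Walk.edges_cons, Walk.edges_append, List.mem_cons, List.mem_append, not_or]
    at hnot
  rcases hCsupp u hu with huW | huQ <;> rcases hCsupp x hx with hxW | hxQ
  · exact absurd (hWc.mem_edges huW hxW hux) hnot.2.1
  · exact ⟨u, huW, x, hxQ, hux, hnot.1, hnot.2.2.1⟩
  · rw [Sym2.eq_swap] at hnot
    exact ⟨x, hxW, u, huQ, hux.symm, hnot.1, hnot.2.2.1⟩
  · exact absurd (hQc.mem_edges huQ hxQ hux) hnot.2.2.2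

/-- Here `s` stands for the vertices off the interior of a separator path `a a' ⋯ b' b`
and `D` for its edges. -/
theorem Chordal.not_reachable_spanningCoe_induce {G : SimpleGraph V} (hch : Chordal G)
    {D : Set (Sym2 V)} {s : Set V} {a a' b' b : V}
    (haa' : G.Adj a a') (hb'b : G.Adj b' b) (hab : a ≠ b) (ha'b' : a' ≠ b')
    (ha' : a' ∉ s) (hb' : b' ∉ s) (hD : ∀ e ∈ D, ∀ x ∈ e, x ∈ s → e = s(a, a') ∨ e = s(b', b))
    (hsepa : ¬ (G.deleteEdges D).Reachable a a') (hsepb : ¬ (G.deleteEdges D).Reachable b' b)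
    (hcover : ∀ v, (G.deleteEdges D).Reachable a v ∨ (G.deleteEdges D).Reachable a' v)
    (ha : a ∈ s) :
    ¬ (G.induce s).spanningCoe.Reachable a b := by
  classical
  intro hreach
  set H := G.deleteEdges D
  have hsH : (G.induce s).spanningCoe ≤ H := spanningCoe_induce_le_deleteEdges fun e he => by
    by_contra! hes
    rcases hD e he _ (Sym2.out_fst_mem e) (hes _ (Sym2.out_fst_mem e)) with rfl | rfl
    exacts [ha' (hes a' (Sym2.mem_mk_right a a')), hb' (hes b' (Sym2.mem_mk_left b' b))]
  obtain ⟨Q, hQ, hQc, hQr⟩ := hreach.symm.exists_isPath_isChordless_of_spanningCoe_induce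
    (hreach.mem_of_spanningCoe_induce ha)
  have hQs : ∀ v ∈ Q.support, v ∈ s := fun v hv =>
    (hreach.trans (hQr v hv)).mem_of_spanningCoe_induce ha
  have hQa : ∀ v ∈ Q.support, H.Reachable a v := fun v hv => (hreach.trans (hQr v hv)).mono hsH
  have ha'b'H : H.Reachable a' b' :=
    (hcover b').resolve_left fun h => hsepb (h.symm.trans (hQa b Q.start_mem_support))
  obtain ⟨W, hW, hWc, hWr⟩ := (ha'b'H.spanningCoe_induce_of_le (deleteEdges_le D)
    ).exists_isPath_isChordless_of_spanningCoe_induce (Reachable.refl a')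
  have hWa : ∀ v ∈ W.support, ¬ H.Reachable a v := fun v hv hav =>
    hsepa (hav.trans ((hWr v hv).mem_of_spanningCoe_induce (Reachable.refl a')).symm)
  obtain ⟨u, hu, x, hx, hux, hne₁, hne₂⟩ :=
    hch.exists_cross_chord haa' hb'b hab ha'b' hW hQ hWc hQc fun v hvW hvQ => hWa v hvW (hQa v hvQ)
  by_cases he : s(u, x) ∈ D
  · rcases hD _ he x (Sym2.mem_mk_right u x) (hQs x hx) with h | h
    exacts [hne₁ h, hne₂ h]
  · refine hWa u hu ((hQa x hx).trans (Adj.reachable ?_))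
    exact (deleteEdges_adj ..).2 ⟨hux.symm, by rwa [Sym2.eq_swap]⟩

section Lists

variable {G : SimpleGraph V} {p q : List V} {x y a b S T : V} {e : Sym2 V}

lemma edgesOf_cons_cons (l : List V) :
    edgesOf (x :: y :: l) = insert s(x, y) (edgesOf (y :: l)) := by
  ext e
  constructor
  · rintro ⟨_ | i, hi, rfl⟩
    · exact .inl rfl
    · exact .inr ⟨i, by simpa using hi, rfl⟩
  · rintro (rfl | ⟨i, hi, rfl⟩)
    · exact ⟨0, by simp, rfl⟩
    · exact ⟨i + 1, by simpa using hi, rfl⟩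

lemma edgesOf_reverse_subset (p : List V) : edgesOf p.reverse ⊆ edgesOf p := by
  rintro e ⟨i, hi, rfl⟩
  simp only [List.length_reverse] at hi
  refine ⟨p.length - 2 - i, by omega, ?_⟩
  simp only [List.get_eq_getElem, List.getElem_reverse]
  rw [Sym2.eq_swap]
  congr 2 <;> omega

@[simp]
lemma edgesOf_reverse (p : List V) : edgesOf p.reverse = edgesOf p :=
  (edgesOf_reverse_subset p).antisymm (by simpa using edgesOf_reverse_subset p.reverse)

lemma mem_of_mem_edgesOf (he : e ∈ edgesOf p) (hx : x ∈ e) : x ∈ p := by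
  obtain ⟨i, hi, rfl⟩ := he
  rcases Sym2.mem_iff.1 hx with rfl | rfl <;> exact List.get_mem _ _

lemma eq_of_mem_edgesOf_cons_cons {l : List V} (hl : (x :: y :: l).Nodup)
    (he : e ∈ edgesOf (x :: y :: l)) (hx : x ∈ e) : e = s(x, y) := by
  rw [edgesOf_cons_cons] at he
  exact he.resolve_right fun he => (List.nodup_cons.1 hl).1 (mem_of_mem_edgesOf he hx)

lemma contigSub_iff : ContigSub q p ↔ q ≠ [] ∧ q <:+: p := by
  constructor
  · rintro ⟨i, j, hij, hj, rfl⟩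
    refine ⟨?_, (List.drop_suffix _ _).isInfix.trans (List.take_prefix _ _).isInfix⟩
    rw [← List.length_pos_iff]
    simp [subseq]
    omega
  · rintro ⟨hq, t, u, rfl⟩
    have := List.length_pos_iff.2 hq
    refine ⟨t.length, t.length + q.length - 1, by omega, by simp; omega, ?_⟩
    simp only [subseq, Nat.sub_add_cancel (by omega : 1 ≤ t.length + q.length)]
    rw [List.take_left' (by simp), List.drop_left]

lemma ContigSub.reverse (h : ContigSub q p) : ContigSub q.reverse p.reverse := by
  rw [contigSub_iff] at h ⊢
  simpa using h

lemma IsSimpleSeq.reverse (h : IsSimpleSeq G p) : IsSimpleSeq G p.reverse :=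
  ⟨⟨by simpa using h.1.1, List.isChain_reverse.2 (h.1.2.imp fun _ _ h => h.symm)⟩,
    List.nodup_reverse.2 h.2⟩

@[simp]
lemma separatingPath_reverse : SeparatingPath G p.reverse ↔ SeparatingPath G p := by
  simp [SeparatingPath]

lemma SeparatorPath.reverse (h : SeparatorPath G p) : SeparatorPath G p.reverse := by
  refine ⟨h.1.reverse, separatingPath_reverse.2 h.2.1, fun q hq hqp hsep => ?_⟩
  refine h.2.2 q.reverse (by simpa using hq.reverse) ?_ (separatingPath_reverse.2 hsep)
  rintro rfl
  exact hqp (List.reverse_reverse q).symm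

lemma Traversable.reverse (h : Traversable G S T p) : Traversable G T S p.reverse := by
  obtain ⟨q, hq, hS, hT, hpq⟩ := h
  exact ⟨q.reverse, hq.reverse, by simpa using hT, by simpa using hS, hpq.reverse⟩

end Lists

section Separators

variable {G : SimpleGraph V} {l r : List V} {x y a b S T u v : V} {s : Set V}

lemma SeparatorPath.connected_deleteEdges_tail (h : SeparatorPath G (x :: y :: l)) :
    (G.deleteEdges (edgesOf (y :: l))).Connected := by
  refine not_not.1 (h.2.2 _ (contigSub_iff.2 ⟨List.cons_ne_nil _ _, ?_⟩) ?_)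
  · exact (List.suffix_cons _ _).isInfix
  · exact fun h => by simpa using congrArg List.length h

lemma SeparatorPath.reachable_or_reachable (h : SeparatorPath G (x :: y :: l)) (v : V) :
    (G.deleteEdges (edgesOf (x :: y :: l))).Reachable x v ∨
      (G.deleteEdges (edgesOf (x :: y :: l))).Reachable y v := by
  refine reachable_or_reachable_of_connected_sup_edge
    (h.connected_deleteEdges_tail.mono fun u w huw => ?_) v
  rw [deleteEdges_adj] at huw
  by_cases he : s(u, w) = s(x, y)
  · exact .inr ((edge_adj ..).2 ⟨Sym2.eq_iff.1 he, huw.1.ne⟩)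
  · refine .inl ((deleteEdges_adj ..).2 ⟨huw.1, ?_⟩)
    rw [edgesOf_cons_cons]
    rintro (he' | he')
    exacts [he he', huw.2 he']

lemma SeparatorPath.not_reachable (h : SeparatorPath G (x :: y :: l)) :
    ¬ (G.deleteEdges (edgesOf (x :: y :: l))).Reachable x y := fun hxy =>
  h.2.1 ((connected_iff _).2 ⟨fun u v =>
    ((h.reachable_or_reachable u).elim id hxy.trans).symm.trans
      ((h.reachable_or_reachable v).elim id hxy.trans), ⟨x⟩⟩)

lemma Traversable.reachable_head (h : Traversable G S T r) (ha : r.head? = some a)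
    (hs : ∀ v ∉ r, v ∈ s) (has : a ∈ s) : (G.induce s).spanningCoe.Reachable S a := by
  obtain ⟨p, ⟨⟨-, hp⟩, hnd⟩, hS, -, hrp⟩ := h
  obtain ⟨-, t, u, rfl⟩ := contigSub_iff.1 hrp
  obtain ⟨r, rfl⟩ := List.head?_eq_some_iff.1 ha
  have hdisj : t.Disjoint (a :: r) := List.disjoint_of_nodup_append hnd.of_append_left
  have hp' : t ++ a :: r ++ u = (t ++ [a]) ++ (r ++ u) := by simp
  rw [hp'] at hp hS
  refine reachable_spanningCoe_induce_of_isChain hp.left_of_append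
    (by simpa [List.head?_append] using hS) (by simp) fun v hv => ?_
  rcases List.mem_append.1 hv with hvt | hva
  · exact hs v (hdisj hvt)
  · rwa [List.mem_singleton.1 hva]

lemma StronglyConn.reachable_spanningCoe_induce (h : StronglyConn G r u v)
    (hs : ∀ w ∉ r, w ∈ s) (hu : u ∈ s) (hv : v ∈ s) :
    (G.induce s).spanningCoe.Reachable u v := by
  obtain ⟨q, ⟨-, hq⟩, hqu, hqv, -, hinner⟩ := h
  refine reachable_spanningCoe_induce_of_isChain hq hqu hqv fun w hw => ?_
  obtain ⟨i, hi, rfl⟩ := List.getElem_of_mem hw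
  rcases Nat.eq_zero_or_pos i with rfl | hi0
  · rw [List.head?_eq_getElem?, List.getElem?_eq_getElem hi, Option.some.injEq] at hqu
    rwa [hqu]
  by_cases hil : i + 1 = q.length
  · rw [List.getLast?_eq_getElem?, List.getElem?_eq_getElem (by omega), Option.some.injEq] at hqv
    simp only [← hil, Nat.add_sub_cancel] at hqv
    rwa [hqv]
  · exact hs _ (hinner i hi hi0 (by omega))

lemma exists_eq_cons_cons_append (hlen : 3 < r.length) (ha : r.head? = some a)
    (hb : r.getLast? = some b) : ∃ a' b' m, r = a :: a' :: (m ++ [b', b]) := by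
  obtain ⟨l, rfl⟩ := List.getLast?_eq_some_iff.1 hb
  obtain ⟨l, b', rfl⟩ := (List.eq_nil_or_concat' l).resolve_left (by rintro rfl; simp at hlen)
  rcases l with _ | ⟨a₀, _ | ⟨a', m⟩⟩
  · simp at hlen
  · simp at hlen
  · simp only [List.cons_append, List.head?_cons, Option.some.injEq] at ha
    exact ⟨a', b', m, by simp [ha]⟩

theorem SeparatorPath.not_reachable_ends (hch : Chordal G) (hr : SeparatorPath G r)
    (hlen : 3 < r.length) (ha : r.head? = some a) (hb : r.getLast? = some b) :
    ¬ (G.induce {v | v ∈ r → v = a ∨ v = b}).spanningCoe.Reachable a b := by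
  obtain ⟨a', b', m, rfl⟩ := exists_eq_cons_cons_append hlen ha hb
  have hrev : (a :: a' :: (m ++ [b', b])).reverse = b :: b' :: (m.reverse ++ [a', a]) := by simp
  have hr' := hr.reverse
  have hD' := edgesOf_reverse (a :: a' :: (m ++ [b', b]))
  rw [hrev] at hr' hD'
  have hnd := hr.1.2
  simp only [List.nodup_cons, List.nodup_append, List.mem_cons, List.mem_append] at hnd
  refine hch.not_reachable_spanningCoe_induce (List.isChain_cons_cons.1 hr.1.1.2).1
    (List.isChain_cons_cons.1 hr'.1.1.2).1.symm (by tauto) (by tauto) (by simp; tauto)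
    (by simp at hnd ⊢; tauto) ?_ hr.not_reachable (fun h => hr'.not_reachable (hD' ▸ h.symm))
    hr.reachable_or_reachable (by simp)
  intro e he x hx hxs
  rcases hxs (mem_of_mem_edgesOf he hx) with rfl | rfl
  · exact .inl (eq_of_mem_edgesOf_cons_cons hr.1.2 he hx)
  · rw [← hD'] at he
    exact .inr ((eq_of_mem_edgesOf_cons_cons hr'.1.2 he hx).trans (Sym2.eq_swap))

end Separators

theorem normalSep_not_strongly_connected_endpoints_general
    {V : Type*} (G : SimpleGraph V)
    (hchordal : Chordal G)
    (S T : V)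
    (w : Sym2 V → ℝ)
    (r : List V) (hr : NormalSep G w S T r)
    (a b : V) (ha : r.head? = some a) (hb : r.getLast? = some b) :
    ¬ StronglyConn G r a T ∧ ¬ StronglyConn G r b S ∧
      ¬ StronglyConn G r S T ∧ ¬ NormalSep G w S T r.reverse := by
  obtain ⟨hsep, htrav, -, hlen⟩ := hr
  set s := {v | v ∈ r → v = a ∨ v = b}
  have key := hsep.not_reachable_ends hchordal hlen ha hb
  have hs : ∀ v ∉ r, v ∈ s := fun v hv hvr => absurd hvr hv
  have has : a ∈ s := fun _ => .inl rfl
  have hbs : b ∈ s := fun _ => .inr rfl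
  have hrev : ∀ v ∉ r.reverse, v ∈ s := fun v hv => hs v (by simpa using hv)
  have hSa := htrav.reachable_head ha hs has
  have hTb := htrav.reverse.reachable_head (by simpa using hb) hrev hbs
  have hSs := hSa.symm.mem_of_spanningCoe_induce has
  have hTs := hTb.symm.mem_of_spanningCoe_induce hbs
  refine ⟨fun h => key ?_, fun h => key ?_, fun h => key ?_, fun h => key ?_⟩
  · exact (h.reachable_spanningCoe_induce hs has hTs).trans hTb
  · exact ((h.reachable_spanningCoe_induce hs hbs hSs).trans hSa).symm
  · exact hSa.symm.trans ((h.reachable_spanningCoe_induce hs hSs hTs).trans hTb)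
  · exact hSa.symm.trans (h.2.1.reachable_head (by simpa using hb) hrev hbs)

/-- For a normal separator path `r`: `r_0` and `T` are not strongly
`r`-connected, `r_{|r|-1}` and `S` are not strongly `r`-connected, `S` and
`T` are not strongly `r`-connected, and the reverse of `r` is not a normal
separator path. -/
theorem normalSep_not_strongly_connected_endpoints
    {V : Type*} [Fintype V] (G : SimpleGraph V)
    (hconn : G.Connected) (hchordal : Chordal G)
    (S T : V) (hST : S ≠ T) (hnb : ∀ e : Sym2 V, ¬ G.IsBridge e)
    (w : Sym2 V → ℝ) (hw : EdgePos G w)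
    (r : List V) (hr : NormalSep G w S T r)
    (a b : V) (ha : r.head? = some a) (hb : r.getLast? = some b) :
    ¬ StronglyConn G r a T ∧ ¬ StronglyConn G r b S ∧
      ¬ StronglyConn G r S T ∧ ¬ NormalSep G w S T r.reverse :=
  normalSep_not_strongly_connected_endpoints_general G hchordal S T w r hr a b ha hb

end NSP
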